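/- For n ≥ 1, the set B_{2n+2} of nonempty borders of M_{2n+2} equals {0} ∪ { φ(b)·0 : b ∈ B_{2n+1} }, and the set B_{2n+3} of nonempty borders of M_{2n+3} equals { w : 0·w = φ(b) for some b ∈ B_{2n+2} }, with B_3 = {1, 11}. -/

import Mathlib

/-- The Fibonacci morphism: `false` (=0) ↦ 01, `true` (=1) ↦ 0. -/
def phi (w : List Bool) : List Bool :=
  w.flatMap (fun b => if b then [false] else [false, true])

/-- The Fibonacci words: f₁ = 1, f₂ = 0, f_{n+2} = f_{n+1} f_n. -/
def fw : ℕ → List Bool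
  | 0 => []
  | 1 => [true]
  | 2 => [false]
  | (n+3) => fw (n+2) ++ fw (n+1)

/-- Palindromic prefix: f_n with its last two letters removed. -/
def pw (n : ℕ) : List Bool := (fw n).dropLast.dropLast

/-- Minimal forbidden words of the Fibonacci word:
`M_{2n+1} = 1 p_{2n+1} 1`, `M_{2n+2} = 0 p_{2n+2} 0`. -/
def Mw (n : ℕ) : List Bool :=
  if n % 2 = 0 then false :: (pw n ++ [false]) else true :: (pw n ++ [true])

/-- Correlation bit: `corr u v k` holds iff `C_{u,v}[k] = 1`. -/
def corr {α : Type*} (u v : List α) (k : ℕ) : Prop :=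
  ∀ i j : ℕ, i < u.length → j < v.length → i = j + k → u[i]? = v[j]?

/-- A border of a word is both a prefix and a suffix. -/
def IsBorder {α : Type*} (b w : List α) : Prop := b <+: w ∧ b <:+ w

/-- The set of nonempty borders of `M_n`. -/
def Bset (n : ℕ) : Set (List Bool) := {b | b ≠ [] ∧ IsBorder b (Mw n)}

open scoped Classical in
/-- The correlation polynomial `C_{u,v}(z) = ∑_{k<|u|} C_{u,v}[k] z^{|u|-1-k}`. -/
noncomputable def corrPoly (u v : List Bool) : Polynomial ℤ :=
  ∑ k ∈ Finset.range u.length,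
    if corr u v k then Polynomial.X ^ (u.length - 1 - k) else 0

open scoped Classical in
/-- The nonempty borders of `w`, as a finset. -/
noncomputable def borderFinset (w : List Bool) : Finset (List Bool) :=
  ((Finset.range (w.length + 1)).image (fun k => w.take k)).filter
    (fun b => b ≠ [] ∧ b <:+ w)

/-! Both recursions come from the identities `M_{2n+2} = φ(M_{2n+1}) 0` and
`0 M_{2n+3} = φ(M_{2n+2})`, which follow from `p_{k+1} = φ(p_k) 0` (k ≥ 3), itself a consequence
of `φ(f_k) = f_{k+1}` and of `f_k` ending in `01` or `10`.

Borders are then transported along φ by desubstitution. The code `{0, 01}` is a suffix code, so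
every suffix of `φ(x)` is `φ(b)`, or `φ(b)` without its leading `0`, for a suffix `b` of `x`.
It is not a prefix code: a prefix of `φ(x)` may end with the `0` of a block `01`, so it is `φ(b)`
for a prefix `b` of `x` only up to a final letter `1` of `b`. A following `0`, or the fact that
`b` is a border of a word ending in `0`, removes this ambiguity. -/

open List

def nonemptyBorders {α : Type*} (w : List α) : Set (List α) := {b | b ≠ [] ∧ IsBorder b w}

@[simp] theorem phi_nil : phi [] = [] := rfl

@[simp] theorem phi_cons_false (l : List Bool) : phi (false :: l) = false :: true :: phi l := rfl

@[simp] theorem phi_cons_true (l : List Bool) : phi (true :: l) = false :: phi l := rfl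

@[simp] theorem phi_append (a b : List Bool) : phi (a ++ b) = phi a ++ phi b := flatMap_append

theorem List.IsPrefix.phi {b x : List Bool} (h : b <+: x) : phi b <+: phi x :=
  h.flatMap _

theorem List.IsSuffix.phi {b x : List Bool} (h : b <:+ x) : phi b <:+ phi x :=
  h.flatMap _

theorem phi_eq_nil_iff {x : List Bool} : phi x = [] ↔ x = [] := by
  cases x with
  | nil => simp
  | cons c x => cases c <;> simp

theorem head?_phi_ne_true (x : List Bool) : (phi x).head? ≠ some true := by
  cases x with
  | nil => simp
  | cons c x => cases c <;> simp

theorem not_cons_true_prefix_phi (t x : List Bool) : ¬ true :: t <+: phi x := by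
  cases x with
  | nil => simp
  | cons c x => cases c <;> simp

theorem prefix_or_of_phi_prefix_phi {b x : List Bool} (h : phi b <+: phi x) :
    b <+: x ∨ ∃ b', b = b' ++ [true] ∧ b' ++ [false] <+: x := by
  induction b generalizing x with
  | nil => exact Or.inl nil_prefix
  | cons c b ih =>
    cases x with
    | nil => cases c <;> simp at h
    | cons d x =>
      cases c <;> cases d <;> simp only [phi_cons_false, phi_cons_true, cons_prefix_cons,
        true_and, Bool.false_eq_true, false_and, Bool.true_eq_false] at h ⊢
      · rcases ih h with h | ⟨b', rfl, h⟩
        · exact Or.inl h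
        · exact Or.inr ⟨false :: b', rfl, by simpa⟩
      · exact absurd h (not_cons_true_prefix_phi _ _)
      · cases b with
        | nil => exact Or.inr ⟨[], rfl, by simp⟩
        | cons e b => cases e <;> simp at h
      · rcases ih h with h | ⟨b', rfl, h⟩
        · exact Or.inl h
        · exact Or.inr ⟨true :: b', rfl, by simpa⟩

theorem phi_append_false_prefix_iff {b x : List Bool} :
    phi b ++ [false] <+: phi x ++ [false] ↔ b <+: x := by
  constructor
  · intro h
    have h' : phi (b ++ [true]) <+: phi (x ++ [true]) := by simpa using h
    rcases prefix_or_of_phi_prefix_phi h' with h | ⟨b', hb, h⟩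
    · rcases prefix_concat_iff.1 h with h | h
      · rw [append_cancel_right h]
      · exact (prefix_append b _).trans h
    · rw [append_cancel_right hb]
      rcases prefix_concat_iff.1 h with h | h
      · simp at h
      · exact (prefix_append b' _).trans h
  · rintro ⟨t, rfl⟩
    rw [phi_append, append_assoc, prefix_append_right_inj]
    cases t with
    | nil => simp
    | cons c t => cases c <;> simp

theorem exists_suffix_phi_eq {x u : List Bool} (hu : u <:+ phi x) :
    ∃ b, b <:+ x ∧ (phi b = u ∨ phi b = false :: u) := by
  induction x generalizing u with
  | nil => exact ⟨[], suffix_refl _, Or.inl (suffix_nil.1 hu).symm⟩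
  | cons c x ih =>
    have of_tail (h : u <:+ phi x) : ∃ b, b <:+ c :: x ∧ (phi b = u ∨ phi b = false :: u) :=
      let ⟨b, hb, hbu⟩ := ih h
      ⟨b, hb.trans (suffix_cons c x), hbu⟩
    cases c
    · rw [phi_cons_false] at hu
      rcases suffix_cons_iff.1 hu with rfl | hu
      · exact ⟨_, suffix_refl _, Or.inl rfl⟩
      rcases suffix_cons_iff.1 hu with rfl | hu
      · exact ⟨_, suffix_refl _, Or.inr rfl⟩
      exact of_tail hu
    · rw [phi_cons_true] at hu
      rcases suffix_cons_iff.1 hu with rfl | hu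
      · exact ⟨_, suffix_refl _, Or.inl rfl⟩
      exact of_tail hu

theorem exists_suffix_phi_eq_of_head?_ne_true {x u : List Bool} (hu : u <:+ phi x)
    (hhead : u.head? ≠ some true) : ∃ b, b <:+ x ∧ phi b = u := by
  obtain ⟨b, hbx, hbu | hbu⟩ := exists_suffix_phi_eq hu
  · exact ⟨b, hbx, hbu⟩
  rcases b with _ | ⟨_ | _, b⟩
  · simp at hbu
  · simp only [phi_cons_false, cons.injEq, true_and] at hbu
    simp [← hbu] at hhead
  · simp only [phi_cons_true, cons.injEq, true_and] at hbu
    exact ⟨b, (suffix_cons _ b).trans hbx, hbu⟩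

theorem exists_suffix_phi_eq_cons_of_head?_eq_true {x u : List Bool} (hu : u <:+ phi x)
    (hhead : u.head? = some true) : ∃ b, b <:+ x ∧ phi b = false :: u := by
  obtain ⟨b, hbx, hbu | hbu⟩ := exists_suffix_phi_eq hu
  · exact absurd (hbu ▸ hhead) (head?_phi_ne_true b)
  · exact ⟨b, hbx, hbu⟩

theorem nonemptyBorders_phi_append_false (M : List Bool) :
    nonemptyBorders (phi M ++ [false]) =
      {[false]} ∪ {w | ∃ b ∈ nonemptyBorders M, w = phi b ++ [false]} := by
  have head_false : (phi M ++ [false]).head? = some false := by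
    cases M with
    | nil => rfl
    | cons c M => cases c <;> rfl
  ext w
  simp only [nonemptyBorders, IsBorder, Set.mem_union, Set.mem_singleton_iff, Set.mem_ofPred_eq]
  constructor
  · rintro ⟨hne, hpre, hsuf⟩
    rcases suffix_concat_iff.1 hsuf with rfl | ⟨s, rfl, hs⟩
    · exact absurd rfl hne
    rcases eq_or_ne s [] with rfl | hs_ne
    · exact Or.inl rfl
    have hhead : s.head? ≠ some true := by
      obtain ⟨t, ht⟩ := hpre
      rw [← ht, append_assoc, head?_append_of_ne_nil _ hs_ne] at head_false
      simp [head_false]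
    obtain ⟨b, hbM, rfl⟩ := exists_suffix_phi_eq_of_head?_ne_true hs hhead
    exact Or.inr
      ⟨b, ⟨mt phi_eq_nil_iff.2 hs_ne, phi_append_false_prefix_iff.1 hpre, hbM⟩, rfl⟩
  · rintro (rfl | ⟨b, ⟨-, hbpre, hbsuf⟩, rfl⟩)
    · exact ⟨cons_ne_nil _ _, phi_append_false_prefix_iff.2 (nil_prefix (l := M)),
        suffix_append _ _⟩
    · exact ⟨by simp, phi_append_false_prefix_iff.2 hbpre, suffix_append_self_iff.2 hbsuf.phi⟩

theorem nonemptyBorders_of_cons_false_eq_phi {M M' : List Bool} (hM' : false :: M' = phi M)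
    (hhead : M.head? = some false) (hlast : M.getLast? = some false) :
    nonemptyBorders M' = {w | ∃ b ∈ nonemptyBorders M, false :: w = phi b} := by
  obtain ⟨m, rfl⟩ := head?_eq_some_iff.1 hhead
  obtain rfl : M' = true :: phi m := by simpa using hM'
  ext w
  simp only [nonemptyBorders, IsBorder, Set.mem_ofPred_eq]
  constructor
  · rintro ⟨hne, hpre, hsuf⟩
    have hw_head : w.head? = some true := by
      obtain ⟨c, w, rfl⟩ := exists_cons_of_ne_nil hne
      simp_all
    obtain ⟨b, hbsuf, hb⟩ := exists_suffix_phi_eq_cons_of_head?_eq_true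
      (x := false :: m) (hsuf.trans (suffix_cons false _)) hw_head
    have hb_ne : b ≠ [] := by rintro rfl; simp at hb
    have hbpre : phi b <+: phi (false :: m) := by rw [hb, ← hM']; simpa using hpre
    refine ⟨b, ⟨hb_ne, ?_, hbsuf⟩, hb.symm⟩
    rcases prefix_or_of_phi_prefix_phi hbpre with h | ⟨b', rfl, -⟩
    · exact h
    · obtain ⟨t, ht⟩ := hbsuf
      simp [← ht] at hlast
  · rintro ⟨b, ⟨hb_ne, hbpre, hbsuf⟩, hb⟩
    obtain ⟨c, b, rfl⟩ := exists_cons_of_ne_nil hb_ne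
    rw [cons_prefix_cons] at hbpre
    obtain ⟨rfl, hbpre⟩ := hbpre
    obtain rfl : w = true :: phi b := by simpa using hb
    refine ⟨cons_ne_nil _ _, by simpa using hbpre.phi, ?_⟩
    have hsuf : false :: true :: phi b <:+ false :: true :: phi m := hbsuf.phi
    rcases suffix_cons_iff.1 hsuf with h | h
    · simp only [cons.injEq, true_and] at h
      rw [h]
    · exact (suffix_cons _ _).trans h

theorem phi_fw : ∀ k, phi (fw (k + 1)) = fw (k + 2)
  | 0 => rfl
  | 1 => rfl
  | k + 2 => by rw [fw, phi_append, phi_fw (k + 1), phi_fw k]; rfl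

theorem fw_eq_append_of_fw_eq {k : ℕ} {q : List Bool} {a : Bool}
    (h : fw (k + 1) = q ++ [a, !a]) :
    fw (k + 2) = (phi q ++ [false]) ++ [!a, !!a] := by
  rw [← phi_fw, h]
  cases a <;> simp

theorem pw_eq_of_fw_eq {m : ℕ} {q : List Bool} {a b : Bool} (h : fw m = q ++ [a, b]) :
    pw m = q := by
  rw [pw, h, show q ++ [a, b] = q ++ [a] ++ [b] by simp, dropLast_concat, dropLast_concat]

theorem exists_fw_eq_append {m : ℕ} (hm : 3 ≤ m) : ∃ q a, fw m = q ++ [a, !a] := by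
  induction m, hm using Nat.le_induction with
  | base => exact ⟨[], false, rfl⟩
  | succ m hm ih =>
    obtain ⟨q, a, hq⟩ := ih
    obtain ⟨k, rfl⟩ : ∃ k, m = k + 1 := ⟨m - 1, by omega⟩
    exact ⟨_, _, fw_eq_append_of_fw_eq hq⟩

theorem pw_succ {m : ℕ} (hm : 3 ≤ m) : pw (m + 1) = phi (pw m) ++ [false] := by
  obtain ⟨q, a, hq⟩ := exists_fw_eq_append hm
  obtain ⟨k, rfl⟩ : ∃ k, m = k + 1 := ⟨m - 1, by omega⟩
  rw [pw_eq_of_fw_eq hq, pw_eq_of_fw_eq (fw_eq_append_of_fw_eq hq)]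

theorem Mw_two_mul_add_one (n : ℕ) : Mw (2 * n + 1) = true :: (pw (2 * n + 1) ++ [true]) := by
  simp [Mw]

theorem Mw_two_mul_add_two (n : ℕ) : Mw (2 * n + 2) = false :: (pw (2 * n + 2) ++ [false]) := by
  simp [Mw]

theorem Mw_two_mul_add_two_eq_phi {n : ℕ} (hn : 1 ≤ n) :
    Mw (2 * n + 2) = phi (Mw (2 * n + 1)) ++ [false] := by
  rw [Mw_two_mul_add_two, Mw_two_mul_add_one, pw_succ (by omega)]
  simp

theorem cons_false_Mw_two_mul_add_three {n : ℕ} (hn : 1 ≤ n) :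
    false :: Mw (2 * n + 3) = phi (Mw (2 * n + 2)) := by
  rw [show 2 * n + 3 = 2 * (n + 1) + 1 by ring, Mw_two_mul_add_one, Mw_two_mul_add_two,
    pw_succ (by omega)]
  simp [Nat.mul_succ]

theorem Bset_three : Bset 3 = {[true], [true, true]} := by
  ext w
  simp only [Bset, IsBorder, show Mw 3 = [true, true] from rfl, ← mem_inits]
  constructor
  · rintro ⟨hne, hpre, -⟩
    rw [show inits [true, true] = [[], [true], [true, true]] from rfl] at hpre
    simpa [hne] using hpre
  · rintro (rfl | rfl) <;> decide

theorem stmt14 (n : ℕ) (hn : 1 ≤ n) :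
    Bset 3 = {[true], [true, true]} ∧
    Bset (2*n+2) = {[false]} ∪ {w | ∃ b ∈ Bset (2*n+1), w = phi b ++ [false]} ∧
    Bset (2*n+3) = {w | ∃ b ∈ Bset (2*n+2), false :: w = phi b} := by
  refine ⟨Bset_three, ?_, ?_⟩
  · change nonemptyBorders _ = _
    rw [Mw_two_mul_add_two_eq_phi hn, nonemptyBorders_phi_append_false]
    rfl
  · refine nonemptyBorders_of_cons_false_eq_phi (cons_false_Mw_two_mul_add_three hn) ?_ ?_
    · rw [Mw_two_mul_add_two, head?_cons]
    · rw [Mw_two_mul_add_two, ← cons_append, getLast?_concat]
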